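/- Let ν > 1 and 0 < r₋ < r₊ be real numbers. With s := √(r₊ r₋ (ν²+3)), R²(r) := (r/4)·[3(ν²−1)r + (ν²+3)(r₊+r₋) − 4νs], N²(r) := (ν²+3)(r−r₊)(r−r₋)/(4R²(r)), N^θ(r) := (2νr − s)/(2R²(r)), Ω_H := −2/(2νr₊ − s), and r_C := (4ν²r₊ − (ν²+3)r₋)/(3(ν²−1)): one has r_C > r₊, and the squared norm h(r) := −N²(r) + R²(r)(N^θ(r) + Ω_H)² of the horizon-generating Killing vector χ = ∂_t + Ω_H∂_θ satisfies h(r) < 0 for r₊ < r < r_C, h(r_C) = 0, and h(r) > 0 for r > r_C. That is, χ is timelike precisely between the horizon and the speed-of-light surface r = r_C. -/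

import Mathlib

/-- s := √(r₊ r₋ (ν²+3)). -/
noncomputable def sBH (ν rp rm : ℝ) : ℝ := Real.sqrt (rp * rm * (ν ^ 2 + 3))

/-- R²(r) := (r/4)·[3(ν²−1)r + (ν²+3)(r₊+r₋) − 4νs]. -/
noncomputable def R2 (ν rp rm r : ℝ) : ℝ :=
  r / 4 * (3 * (ν ^ 2 - 1) * r + (ν ^ 2 + 3) * (rp + rm) - 4 * ν * sBH ν rp rm)

/-- N²(r) := (ν²+3)(r−r₊)(r−r₋)/(4R²(r)). -/
noncomputable def N2 (ν rp rm r : ℝ) : ℝ :=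
  (ν ^ 2 + 3) * (r - rp) * (r - rm) / (4 * R2 ν rp rm r)

/-- N^θ(r) := (2νr − s)/(2R²(r)). -/
noncomputable def Nθ (ν rp rm r : ℝ) : ℝ :=
  (2 * ν * r - sBH ν rp rm) / (2 * R2 ν rp rm r)

/-- Ω_H := −2/(2νr₊ − s). -/
noncomputable def ΩH (ν rp rm : ℝ) : ℝ := -2 / (2 * ν * rp - sBH ν rp rm)

/-- The speed-of-light radius r_C := (4ν²r₊ − (ν²+3)r₋)/(3(ν²−1)). -/
noncomputable def rC (ν rp rm : ℝ) : ℝ :=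
  (4 * ν ^ 2 * rp - (ν ^ 2 + 3) * rm) / (3 * (ν ^ 2 - 1))

/-- The squared norm h(r) := −N²(r) + R²(r)(N^θ(r) + Ω_H)² of the
horizon-generating Killing vector χ = ∂_t + Ω_H ∂_θ. -/
noncomputable def hNorm (ν rp rm r : ℝ) : ℝ :=
  -N2 ν rp rm r + R2 ν rp rm r * (Nθ ν rp rm r + ΩH ν rp rm) ^ 2

/-!
Over the common denominator `r B(r) (2νr₊ − s)²`, where `R²(r) = r B(r) / 4`, the numerator
of `h` factors modulo `s² = r₊r₋(ν² + 3)` as `(r − r₊)(3(ν² − 1)r − (4ν²r₊ − (ν² + 3)r₋)) · r B(r)`.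
Hence `h(r) = 3(ν² − 1)(r − r₊)(r − r_C) / (2νr₊ − s)²` wherever `R²(r) ≠ 0`, and since
`R² > 0` outside the horizon, the sign of `h` there is the sign of `r − r_C`.
-/

lemma numerator_identity (ν rp rm r S : ℝ) (hS : S ^ 2 = rp * rm * (ν ^ 2 + 3)) :
    -((ν ^ 2 + 3) * (r - rp) * (r - rm)) * (2 * ν * rp - S) ^ 2
      + ((2 * ν * r - S) * (2 * ν * rp - S)
          - r * (3 * (ν ^ 2 - 1) * r + (ν ^ 2 + 3) * (rp + rm) - 4 * ν * S)) ^ 2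
    = (r - rp) * (3 * (ν ^ 2 - 1) * r - (4 * ν ^ 2 * rp - (ν ^ 2 + 3) * rm))
        * (r * (3 * (ν ^ 2 - 1) * r + (ν ^ 2 + 3) * (rp + rm) - 4 * ν * S)) := by
  linear_combination (S ^ 2 + 3 * r ^ 2 - 3 * rm * r - 3 * rp * r + 4 * ν * r * S
    - 4 * ν * rp * S - 3 * ν ^ 2 * r ^ 2 - ν ^ 2 * rm * r - ν ^ 2 * rp * r
    + 4 * ν ^ 2 * rp ^ 2) * hS

section

variable {ν rp rm : ℝ}

lemma sBH_sq (hrm : 0 ≤ rm) (hrp : 0 ≤ rp) : sBH ν rp rm ^ 2 = rp * rm * (ν ^ 2 + 3) :=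
  Real.sq_sqrt (by positivity)

lemma sBH_lt_two_mul_mul (hν : 1 < ν) (hrm : 0 ≤ rm) (hr : rm < rp) :
    sBH ν rp rm < 2 * ν * rp := by
  have hrp : 0 < rp := hrm.trans_lt hr
  rw [sBH, Real.sqrt_lt' (by positivity)]
  have : rp ^ 2 * (ν ^ 2 + 3) ≤ (2 * ν * rp) ^ 2 := by
    nlinarith [mul_le_mul_of_nonneg_left (by nlinarith : 1 ≤ ν ^ 2) (sq_nonneg rp)]
  nlinarith [mul_lt_mul_of_pos_left hr (by positivity : 0 < rp * (ν ^ 2 + 3))]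

lemma rp_lt_rC (hν : 1 < ν) (hr : rm < rp) : rp < rC ν rp rm := by
  rw [rC, lt_div_iff₀ (by nlinarith)]
  nlinarith

lemma hNorm_eq (hs : sBH ν rp rm ^ 2 = rp * rm * (ν ^ 2 + 3)) (hν : ν ^ 2 ≠ 1)
    (hA : 2 * ν * rp - sBH ν rp rm ≠ 0) {r : ℝ} (hR : R2 ν rp rm r ≠ 0) :
    hNorm ν rp rm r
      = 3 * (ν ^ 2 - 1) * (r - rp) * (r - rC ν rp rm) / (2 * ν * rp - sBH ν rp rm) ^ 2 := by
  have hν' : ν ^ 2 - 1 ≠ 0 := sub_ne_zero.mpr hν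
  have key := numerator_identity ν rp rm r _ hs
  rw [hNorm, N2, Nθ, ΩH, rC]
  rw [R2] at hR ⊢
  generalize sBH ν rp rm = s at *
  obtain ⟨⟨hr, -⟩, hB⟩ := And.imp_left div_ne_zero_iff.mp (mul_ne_zero_iff.mp hR)
  generalize 3 * (ν ^ 2 - 1) * r + (ν ^ 2 + 3) * (rp + rm) - 4 * ν * s = B at *
  generalize 2 * ν * rp - s = A at *
  field_simp
  linear_combination 16 * key

-- At the horizon `R² = (2νr₊ − s)² / 4`, and `R² / r` increases with `r`.
lemma R2_pos (hν : 1 < ν) (hrm : 0 ≤ rm) (hr : rm < rp) {r : ℝ} (hr' : rp ≤ r) :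
    0 < R2 ν rp rm r := by
  have hrp : 0 < rp := hrm.trans_lt hr
  have hA := sub_pos.mpr (sBH_lt_two_mul_mul hν hrm hr)
  have hB : rp * (3 * (ν ^ 2 - 1) * rp + (ν ^ 2 + 3) * (rp + rm) - 4 * ν * sBH ν rp rm)
      = (2 * ν * rp - sBH ν rp rm) ^ 2 := by
    linear_combination -(sBH_sq (ν := ν) hrm hrp.le)
  have hBpos := pos_of_mul_pos_right (hB ▸ pow_pos hA 2) hrp.le
  have : 0 ≤ 3 * (ν ^ 2 - 1) * (r - rp) :=
    mul_nonneg (by nlinarith) (sub_nonneg.mpr hr')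
  rw [R2]
  nlinarith

end

/-- r_C > r₊, and χ = ∂_t + Ω_H∂_θ is timelike precisely between
the horizon and the speed-of-light surface: h(r) < 0 for r₊ < r < r_C,
h(r_C) = 0, and h(r) > 0 for r > r_C. -/
theorem stmt7 (ν rp rm : ℝ) (hν : 1 < ν) (hrm : 0 < rm) (hr : rm < rp) :
    rp < rC ν rp rm ∧
    (∀ r : ℝ, rp < r → r < rC ν rp rm → hNorm ν rp rm r < 0) ∧
    hNorm ν rp rm (rC ν rp rm) = 0 ∧
    (∀ r : ℝ, rC ν rp rm < r → 0 < hNorm ν rp rm r) := by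
  have hrC := rp_lt_rC hν hr
  have hc : 0 < 3 * (ν ^ 2 - 1) := by nlinarith
  have hA := sub_pos.mpr (sBH_lt_two_mul_mul hν hrm.le hr)
  have hform (r : ℝ) (hr' : rp < r) := hNorm_eq (sBH_sq hrm.le (hrm.trans hr).le)
    (by nlinarith) hA.ne' (R2_pos hν hrm.le hr hr'.le).ne'
  refine ⟨hrC, fun r h₁ h₂ ↦ ?_, by simp [hform _ hrC], fun r h ↦ ?_⟩
  · rw [hform r h₁]
    exact div_neg_of_neg_of_pos
      (mul_neg_of_pos_of_neg (mul_pos hc (sub_pos.mpr h₁)) (sub_neg.mpr h₂)) (by positivity)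
  · rw [hform r (hrC.trans h)]
    exact div_pos (mul_pos (mul_pos hc (sub_pos.mpr (hrC.trans h))) (sub_pos.mpr h))
      (by positivity)
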